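/- arXiv:2107.08917 — 9 statements merged into one kernel-verified Lean document; each statement's English description precedes it below -/
import Mathlib

section
/- Let D be a pseudometric family on (X, d_X, μ) and (V, d_V), fix ε > 0, and let f, g : X → V. Assume (A1): μ(B̄(t,ε)) > 0 for every t ∈ X, and assume the identification property: for every t ∈ X, D_t^ε(f,g) = 0 implies f(s) = g(s) for all s ∈ B̄(t,ε). If D_t^ε(f,g) = 0 for μ-almost every t ∈ X (in particular, if d^{ε,p}(f,g) = 0), then f(s) = g(s) for every s ∈ X. -/
open Filter MeasureTheory Topology

/-- Under (A1) (all closed `ε`-balls have positive `μ`-measure) and the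
identification property (vanishing of `D_t^ε(f,g)` forces `f = g` on the ball
`B̄(t,ε)`), if `D_t^ε(f,g) = 0` for `μ`-almost every `t` then `f = g` everywhere. -/
theorem integrated_ball_identification
    {X V : Type*} [MetricSpace X] [MeasurableSpace X] [BorelSpace X] [MetricSpace V]
    (μ : Measure X) [IsProbabilityMeasure μ]
    (D : X → ℝ → (X → V) → (X → V) → ℝ)
    (hD_nonneg : ∀ (t : X) (ε : ℝ) (f g : X → V), 0 ≤ D t ε f g)
    (hD_symm : ∀ (t : X) (ε : ℝ) (f g : X → V), D t ε f g = D t ε g f)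
    (hD_self : ∀ (t : X) (ε : ℝ) (f : X → V), D t ε f f = 0)
    (hD_tri : ∀ (t : X) (ε : ℝ) (f g h : X → V), D t ε f g ≤ D t ε f h + D t ε h g)
    (ε : ℝ) (hε : 0 < ε)
    (f g : X → V)
    (hA1 : ∀ t : X, 0 < μ (Metric.closedBall t ε))
    (hident : ∀ t : X, D t ε f g = 0 → ∀ s ∈ Metric.closedBall t ε, f s = g s)
    (h0 : ∀ᵐ t ∂μ, D t ε f g = 0) :
    ∀ s : X, f s = g s := by
  intro s
  have hne : (Metric.closedBall s ε ∩ {t | D t ε f g = 0}).Nonempty := by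
    by_contra h
    rw [Set.not_nonempty_iff_eq_empty] at h
    have hsub : Metric.closedBall s ε ⊆ {t | D t ε f g = 0}ᶜ := by
      intro t ht
      intro htm
      exact Set.eq_empty_iff_forall_notMem.mp h t ⟨ht, htm⟩
    have := measure_mono_null hsub h0
    exact absurd this (hA1 s).ne'
  obtain ⟨t, hts, ht0⟩ := hne
  exact hident t ht0 s (by rw [Metric.mem_closedBall, dist_comm]; exact hts)
end

section
/- Let D be a restriction pseudometric on (X, d_X, μ) and (V, d_V), and let f, g : X → V with M := sup_{x∈X} d_V(f(x), g(x)) < ∞. Assume (A2): there exists K > 0 with D((f, B̄(t,ε)), (g, B̄(t,ε))) ≤ K·M for all t ∈ X and ε ≥ 0; assume (A4) for both f and g: for every t ∈ X, every ε ≥ 0 and every sequence ε_n → ε, D((f, B̄(t,ε_n)), (f, B̄(t,ε))) → 0 and D((g, B̄(t,ε_n)), (g, B̄(t,ε))) → 0; and assume t ↦ D((f, B̄(t,ε)), (g, B̄(t,ε))) is μ-measurable for each ε ≥ 0. Then the map ε ↦ d^{ε,1}(f,g) = ∫_X D((f, B̄(t,ε)), (g, B̄(t,ε))) dμ(t) is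 continuous on [0,∞). -/
open Filter MeasureTheory Topology

/-- For a restriction pseudometric `D` (symmetric, vanishing on equal
pairs, triangle inequality over pairs (function, closed ball)), under (A2) (uniform
bound) and (A4) (continuity in the radius along sequences, for both `f` and `g`),
the map `ε ↦ d^{ε,1}(f,g) = ∫ D((f,B̄(t,ε)),(g,B̄(t,ε))) dμ(t)` is continuous on `[0,∞)`. -/
theorem integrated_ball_continuous_in_epsilon
    {X V : Type*} [MetricSpace X] [MeasurableSpace X] [BorelSpace X] [MetricSpace V]
    (μ : Measure X) [IsProbabilityMeasure μ]
    (D : (X → V) → Set X → (X → V) → Set X → ℝ)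
    (hD_nonneg : ∀ (f : X → V) (A : Set X) (g : X → V) (B : Set X), 0 ≤ D f A g B)
    (hD_symm : ∀ (f : X → V) (A : Set X) (g : X → V) (B : Set X), D f A g B = D g B f A)
    (hD_self : ∀ (f : X → V) (A : Set X), D f A f A = 0)
    (hD_tri : ∀ (f : X → V) (A : Set X) (g : X → V) (B : Set X) (h : X → V) (C : Set X),
      D f A g B ≤ D f A h C + D h C g B)
    (f g : X → V)
    (M : ℝ) (hM : ∀ x : X, dist (f x) (g x) ≤ M)
    (K : ℝ) (hK : 0 < K)
    (hA2 : ∀ (t : X) (ε : ℝ), 0 ≤ ε →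
      D f (Metric.closedBall t ε) g (Metric.closedBall t ε) ≤ K * M)
    (hA4f : ∀ (t : X) (ε : ℝ), 0 ≤ ε → ∀ εn : ℕ → ℝ, (∀ n, 0 ≤ εn n) →
      Tendsto εn atTop (nhds ε) →
      Tendsto (fun n => D f (Metric.closedBall t (εn n)) f (Metric.closedBall t ε))
        atTop (nhds 0))
    (hA4g : ∀ (t : X) (ε : ℝ), 0 ≤ ε → ∀ εn : ℕ → ℝ, (∀ n, 0 ≤ εn n) →
      Tendsto εn atTop (nhds ε) →
      Tendsto (fun n => D g (Metric.closedBall t (εn n)) g (Metric.closedBall t ε))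
        atTop (nhds 0))
    (hmeas : ∀ ε : ℝ, 0 ≤ ε →
      Measurable fun t => D f (Metric.closedBall t ε) g (Metric.closedBall t ε)) :
    ContinuousOn
      (fun ε => ∫ t, D f (Metric.closedBall t ε) g (Metric.closedBall t ε) ∂μ)
      (Set.Ici (0 : ℝ)) := by
  intro ε hε
  rw [ContinuousWithinAt, tendsto_iff_seq_tendsto]
  intro u hu
  rw [tendsto_nhdsWithin_iff] at hu
  obtain ⟨hu1, hu2⟩ := hu
  set v : ℕ → ℝ := fun n => max (u n) 0 with hv
  have hv0 : ∀ n, 0 ≤ v n := fun n => le_max_right _ _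
  have hvtend : Tendsto v atTop (nhds ε) := by
    have : Tendsto (fun n => max (u n) 0) atTop (nhds (max ε 0)) :=
      hu1.max tendsto_const_nhds
    rwa [max_eq_left hε] at this
  have key : Tendsto (fun n => ∫ t, D f (Metric.closedBall t (v n)) g
      (Metric.closedBall t (v n)) ∂μ) atTop
      (nhds (∫ t, D f (Metric.closedBall t ε) g (Metric.closedBall t ε) ∂μ)) := by
    apply tendsto_integral_of_dominated_convergence (fun _ => K * M)
    · exact fun n => ((hmeas (v n) (hv0 n)).aestronglyMeasurable)
    · exact integrable_const _
    · intro n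
      filter_upwards with t
      rw [Real.norm_eq_abs, abs_of_nonneg (hD_nonneg _ _ _ _)]
      exact hA2 t (v n) (hv0 n)
    · filter_upwards with t
      set B := Metric.closedBall t ε
      set c : ℕ → ℝ := fun n => D f (Metric.closedBall t (v n)) f B
      set d : ℕ → ℝ := fun n => D g (Metric.closedBall t (v n)) g B
      have hc : Tendsto c atTop (nhds 0) := hA4f t ε hε v hv0 hvtend
      have hd : Tendsto d atTop (nhds 0) := hA4g t ε hε v hv0 hvtend
      have hlow : ∀ n, D f B g B - (c n + d n) ≤
          D f (Metric.closedBall t (v n)) g (Metric.closedBall t (v n)) := by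
        intro n
        have h1 : D f B g B ≤ c n + (D f (Metric.closedBall t (v n)) g
            (Metric.closedBall t (v n)) + d n) := by
          calc D f B g B ≤ D f B f (Metric.closedBall t (v n)) +
              D f (Metric.closedBall t (v n)) g B := hD_tri _ _ _ _ _ _
            _ ≤ D f B f (Metric.closedBall t (v n)) +
                (D f (Metric.closedBall t (v n)) g (Metric.closedBall t (v n)) +
                 D g (Metric.closedBall t (v n)) g B) := by
                  gcongr; exact hD_tri _ _ _ _ _ _
            _ = c n + (D f (Metric.closedBall t (v n)) g (Metric.closedBall t (v n)) +
                d n) := by rw [hD_symm f B f (Metric.closedBall t (v n))]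
        linarith
      have hhigh : ∀ n, D f (Metric.closedBall t (v n)) g (Metric.closedBall t (v n)) ≤
          D f B g B + (c n + d n) := by
        intro n
        calc D f (Metric.closedBall t (v n)) g (Metric.closedBall t (v n)) ≤
            D f (Metric.closedBall t (v n)) f B +
            D f B g (Metric.closedBall t (v n)) := hD_tri _ _ _ _ _ _
          _ ≤ D f (Metric.closedBall t (v n)) f B +
              (D f B g B + D g B g (Metric.closedBall t (v n))) := by
                gcongr; exact hD_tri _ _ _ _ _ _
          _ = D f B g B + (c n + d n) := by
              rw [hD_symm g B g (Metric.closedBall t (v n))]; ring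
      have l1 : Tendsto (fun n => D f B g B - (c n + d n)) atTop (nhds (D f B g B)) := by
        have := (hc.add hd).const_sub (D f B g B)
        simpa using this
      have l2 : Tendsto (fun n => D f B g B + (c n + d n)) atTop (nhds (D f B g B)) := by
        have := (hc.add hd).const_add (D f B g B)
        simpa using this
      exact tendsto_of_tendsto_of_tendsto_of_le_of_le l1 l2 hlow hhigh
  refine key.congr' ?_
  filter_upwards [hu2] with n hn
  have : v n = u n := max_eq_left hn
  simp [this]
end

section
/- Let E be a metric space, endow ℝ × E with the max product metric, and let f, g : ℝ → E be continuous. Then for every t ∈ [0,1], the restricted-graph Hausdorff distance converges to the pointwise distance as the ball radius shrinks: d_H(G_f(A_{t,ε}), G_g(A_{t,ε})) → dist_E(f(t), g(t)) as ε → 0⁺, where A_{t,ε} = [0,1] ∩ [t−ε, t+ε]. -/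
open Filter Topology

/-- (A3) for the Hausdorff distance: for continuous `f, g : ℝ → E`
and `t ∈ [0,1]`, the Hausdorff distance between the graphs restricted to
`A_{t,ε} = [0,1] ∩ [t−ε, t+ε]` converges to the pointwise distance `dist(f(t), g(t))`
as `ε → 0⁺`. -/
theorem hausdorff_restricted_tendsto_pointwise
    {E : Type*} [MetricSpace E] (f g : ℝ → E)
    (hf : Continuous f) (hg : Continuous g)
    (t : ℝ) (ht : t ∈ Set.Icc (0 : ℝ) 1) :
    Tendsto
      (fun ε : ℝ => Metric.hausdorffDist
        ((fun s => (s, f s)) '' (Set.Icc (0 : ℝ) 1 ∩ Set.Icc (t - ε) (t + ε)))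
        ((fun s => (s, g s)) '' (Set.Icc (0 : ℝ) 1 ∩ Set.Icc (t - ε) (t + ε))))
      (nhdsWithin 0 (Set.Ioi 0)) (nhds (dist (f t) (g t))) := by
  rw [Metric.tendsto_nhds]
  intro η ηpos
  set D := dist (f t) (g t) with hD
  obtain ⟨δ₁, δ₁pos, hδ₁⟩ := Metric.continuousAt_iff.1 hf.continuousAt (η/4) (by positivity)
  obtain ⟨δ₂, δ₂pos, hδ₂⟩ := Metric.continuousAt_iff.1 hg.continuousAt (η/4) (by positivity)
  set δ := min δ₁ δ₂ with hδdef
  have δpos : 0 < δ := lt_min δ₁pos δ₂pos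
  filter_upwards [Ioo_mem_nhdsGT_of_mem (show (0:ℝ) ∈ Set.Ico 0 δ from ⟨le_refl _, δpos⟩)]
    with ε hε
  obtain ⟨εpos, εlt⟩ := hε
  set A : Set ℝ := Set.Icc (0:ℝ) 1 ∩ Set.Icc (t - ε) (t + ε) with hA
  have htA : t ∈ A := ⟨ht, by constructor <;> linarith⟩
  have hAdist : ∀ s ∈ A, dist s t < δ := by
    intro s hs
    rcases hs.2 with ⟨h1, h2⟩
    rw [Real.dist_eq, abs_sub_lt_iff]
    constructor <;> linarith
  have hfA : ∀ s ∈ A, dist (f s) (f t) < η/4 :=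
    fun s hs => hδ₁ (lt_of_lt_of_le (hAdist s hs) (min_le_left _ _))
  have hgA : ∀ s ∈ A, dist (g s) (g t) < η/4 :=
    fun s hs => hδ₂ (lt_of_lt_of_le (hAdist s hs) (min_le_right _ _))
  have hAcompact : IsCompact A := isCompact_Icc.inter_right isClosed_Icc
  set Sf := (fun s => (s, f s)) '' A with hSf
  set Sg := (fun s => (s, g s)) '' A with hSg
  have hSfc : IsCompact Sf := hAcompact.image (continuous_id.prodMk hf)
  have hSgc : IsCompact Sg := hAcompact.image (continuous_id.prodMk hg)
  have hSfne : Sf.Nonempty := ⟨_, Set.mem_image_of_mem _ htA⟩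
  have hSgne : Sg.Nonempty := ⟨_, Set.mem_image_of_mem _ htA⟩
  have hfin : EMetric.hausdorffEdist Sf Sg ≠ ⊤ :=
    Metric.hausdorffEdist_ne_top_of_nonempty_of_bounded hSfne hSgne
      hSfc.isBounded hSgc.isBounded
  -- upper bound
  have hub : Metric.hausdorffDist Sf Sg ≤ D + η/2 := by
    apply Metric.hausdorffDist_le_of_mem_dist (by positivity)
    · rintro x ⟨s, hs, rfl⟩
      refine ⟨(s, g s), Set.mem_image_of_mem _ hs, ?_⟩
      rw [Prod.dist_eq]
      simp only [dist_self]
      have h1 : dist (f s) (g s) ≤ dist (f s) (f t) + D + dist (g t) (g s) :=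
        dist_triangle4 _ _ _ _
      have := hfA s hs
      have := hgA s hs
      rw [dist_comm (g t) (g s)] at h1
      refine le_trans (max_le (by positivity) h1) ?_
      linarith
    · rintro y ⟨s, hs, rfl⟩
      refine ⟨(s, f s), Set.mem_image_of_mem _ hs, ?_⟩
      rw [Prod.dist_eq]
      simp only [dist_self]
      have h1 : dist (f s) (g s) ≤ dist (f s) (f t) + D + dist (g t) (g s) :=
        dist_triangle4 _ _ _ _
      have := hfA s hs
      have := hgA s hs
      rw [dist_comm (g t) (g s)] at h1
      rw [dist_comm (f s) (g s)] at h1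
      refine le_trans (max_le (by positivity) h1) ?_
      linarith
  -- lower bound
  have hlb : D - η/2 ≤ Metric.hausdorffDist Sf Sg := by
    refine le_trans ?_
      (Metric.infDist_le_hausdorffDist_of_mem (Set.mem_image_of_mem _ htA) hfin)
    rw [Metric.infDist_eq_iInf]
    haveI := hSgne.to_subtype
    refine le_ciInf ?_
    rintro ⟨y, s, hs, rfl⟩
    have h1 : D ≤ dist (f t) (g s) + dist (g s) (g t) := dist_triangle _ _ _
    have h2 := hgA s hs
    have h3 : dist (f t) (g s) ≤ dist ((t, f t)) ((s, g s)) := by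
      rw [Prod.dist_eq]; exact le_max_right _ _
    simp only
    linarith
  rw [Real.dist_eq, abs_sub_lt_iff]
  constructor <;> linarith
end

section
/- Let E be a metric space, endow ℝ × E with the max product metric, and let f : ℝ → E be continuous. Then for every t ∈ [0,1] and every ε₀ ≥ 0, d_H(G_f(A_{t,ε}), G_f(A_{t,ε₀})) → 0 as ε → ε₀ (with ε ≥ 0), where A_{t,ε} = [0,1] ∩ [t−ε, t+ε] and G_f(A) denotes the graph of f restricted to A. -/
open Filter Topology

lemma clamp_mem_aux (t ε ε₀ s : ℝ) (hε₀ : 0 ≤ ε₀) (ht : t ∈ Set.Icc (0:ℝ) 1)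
    (hs : s ∈ Set.Icc (0:ℝ) 1 ∩ Set.Icc (t - ε) (t + ε)) :
    ∃ s' ∈ Set.Icc (0:ℝ) 1 ∩ Set.Icc (t - ε₀) (t + ε₀), |s - s'| ≤ |ε - ε₀| := by
  obtain ⟨⟨hs0, hs1⟩, hsl, hsr⟩ := hs
  obtain ⟨ht0, ht1⟩ := ht
  refine ⟨max (t - ε₀) (min s (t + ε₀)), ⟨⟨?_, ?_⟩, ?_, ?_⟩, ?_⟩ <;>
    [skip; skip; exact le_max_left _ _; skip;
     rcases abs_cases (ε - ε₀) with ⟨he, _⟩ | ⟨he, _⟩ <;> rw [abs_le] <;> constructor] <;>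
    simp only [min_def, max_def] <;> split_ifs <;> linarith

/-- (A4) for the Hausdorff distance: for continuous `f : ℝ → E`,
`t ∈ [0,1]` and `ε₀ ≥ 0`, the Hausdorff distance between the graphs of `f`
restricted to `A_{t,ε} = [0,1] ∩ [t−ε, t+ε]` and to `A_{t,ε₀}` tends to `0` as
`ε → ε₀` with `ε ≥ 0`. -/
theorem hausdorff_restricted_continuous_in_radius
    {E : Type*} [MetricSpace E] (f : ℝ → E) (hf : Continuous f)
    (t : ℝ) (ht : t ∈ Set.Icc (0 : ℝ) 1) (ε₀ : ℝ) (hε₀ : 0 ≤ ε₀) :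
    Tendsto
      (fun ε : ℝ => Metric.hausdorffDist
        ((fun s => (s, f s)) '' (Set.Icc (0 : ℝ) 1 ∩ Set.Icc (t - ε) (t + ε)))
        ((fun s => (s, f s)) '' (Set.Icc (0 : ℝ) 1 ∩ Set.Icc (t - ε₀) (t + ε₀))))
      (nhdsWithin ε₀ (Set.Ici 0)) (nhds 0) := by
  rw [Metric.tendsto_nhdsWithin_nhds]
  intro δ hδ
  have hfu : UniformContinuousOn f (Set.Icc 0 1) :=
    isCompact_Icc.uniformContinuousOn_of_continuous hf.continuousOn
  rw [Metric.uniformContinuousOn_iff] at hfu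
  obtain ⟨η, hη, hfη⟩ := hfu (δ / 2) (by linarith)
  refine ⟨min η (δ / 2), by positivity, fun ε hε hεd => ?_⟩
  have hεd' : |ε - ε₀| < min η (δ / 2) := by
    rwa [Real.dist_eq] at hεd
  have key : ∀ (a b : ℝ), 0 ≤ a → |b - a| < min η (δ / 2) →
      ∀ x ∈ (fun s => (s, f s)) '' (Set.Icc (0:ℝ) 1 ∩ Set.Icc (t - b) (t + b)),
      ∃ y ∈ (fun s => (s, f s)) '' (Set.Icc (0:ℝ) 1 ∩ Set.Icc (t - a) (t + a)),
      dist x y ≤ δ / 2 := by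
    intro a b ha hba x hx
    obtain ⟨s, hs, rfl⟩ := hx
    obtain ⟨s', hs', hss'⟩ := clamp_mem_aux t b a s ha ht hs
    refine ⟨(s', f s'), Set.mem_image_of_mem _ hs', ?_⟩
    have h1 : |s - s'| < min η (δ / 2) := lt_of_le_of_lt hss' hba
    have h2 : dist (f s) (f s') < δ / 2 := by
      apply hfη s hs.1 s' hs'.1
      rw [Real.dist_eq]
      exact h1.trans_le (min_le_left _ _)
    rw [Prod.dist_eq]
    apply max_le
    · simpa [Real.dist_eq] using le_of_lt (h1.trans_le (min_le_right _ _))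
    · exact le_of_lt h2
  have hH : Metric.hausdorffDist
      ((fun s => (s, f s)) '' (Set.Icc (0:ℝ) 1 ∩ Set.Icc (t - ε) (t + ε)))
      ((fun s => (s, f s)) '' (Set.Icc (0:ℝ) 1 ∩ Set.Icc (t - ε₀) (t + ε₀))) ≤ δ / 2 := by
    apply Metric.hausdorffDist_le_of_mem_dist (by positivity)
    · exact key ε₀ ε hε₀ hεd'
    · intro y hy
      obtain ⟨x, hx, hxy⟩ := key ε ε₀ hε (by rwa [abs_sub_comm]) y hy
      exact ⟨x, hx, dist_comm y x ▸ hxy⟩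
  have hH0 : 0 ≤ Metric.hausdorffDist
      ((fun s => (s, f s)) '' (Set.Icc (0:ℝ) 1 ∩ Set.Icc (t - ε) (t + ε)))
      ((fun s => (s, f s)) '' (Set.Icc (0:ℝ) 1 ∩ Set.Icc (t - ε₀) (t + ε₀))) :=
    Metric.hausdorffDist_nonneg
  rw [Real.dist_eq, sub_zero, abs_of_nonneg hH0]
  linarith
end

section
/- Let E be a metric space, endow ℝ × E with the max product metric, and let f : ℝ → E be continuous. Then for every ε > 0 and every t₀ ∈ [0,1], the restricted graphs of f vary continuously in the center: d_H(G_f(A_{t,ε}), G_f(A_{t₀,ε})) → 0 as t → t₀ with t ∈ [0,1], where A_{t,ε} = [0,1] ∩ [t−ε, t+ε]. This is condition (A5) for the Hausdorff distance. -/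
open Filter Topology

private lemma aux_clamp (ε t τ s : ℝ) (hτ : τ ∈ Set.Icc (0:ℝ) 1)
    (hs : s ∈ Set.Icc (0:ℝ) 1 ∩ Set.Icc (t - ε) (t + ε)) :
    ∃ s' ∈ Set.Icc (0:ℝ) 1 ∩ Set.Icc (τ - ε) (τ + ε), |s - s'| ≤ |t - τ| := by
  obtain ⟨⟨hs0, hs1⟩, hsl, hsr⟩ := hs
  obtain ⟨h0, h1⟩ := hτ
  refine ⟨max 0 (min 1 (s + τ - t)), ⟨⟨le_max_left _ _, ?_⟩, ?_, ?_⟩, ?_⟩ <;>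
    rcases le_total (s + τ - t) 0 with h|h <;> rcases le_total (s + τ - t) 1 with h'|h' <;>
      simp [max_def, min_def, h, h', abs_le, abs_sub_le_iff] <;>
        (try constructor) <;> nlinarith [abs_nonneg (t - τ), le_abs_self (t - τ), neg_abs_le (t - τ)]

/-- (A5) for the Hausdorff distance: for continuous `f : ℝ → E`,
`ε > 0` and `t₀ ∈ [0,1]`, the Hausdorff distance between the graphs of `f`
restricted to `A_{t,ε} = [0,1] ∩ [t−ε, t+ε]` and to `A_{t₀,ε}` tends to `0` as
`t → t₀` with `t ∈ [0,1]`. -/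
theorem hausdorff_restricted_continuous_in_center
    {E : Type*} [MetricSpace E] (f : ℝ → E) (hf : Continuous f)
    (ε : ℝ) (hε : 0 < ε) (t₀ : ℝ) (ht₀ : t₀ ∈ Set.Icc (0 : ℝ) 1) :
    Tendsto
      (fun t : ℝ => Metric.hausdorffDist
        ((fun s => (s, f s)) '' (Set.Icc (0 : ℝ) 1 ∩ Set.Icc (t - ε) (t + ε)))
        ((fun s => (s, f s)) '' (Set.Icc (0 : ℝ) 1 ∩ Set.Icc (t₀ - ε) (t₀ + ε))))
      (nhdsWithin t₀ (Set.Icc 0 1)) (nhds 0) := by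
  have hUC : UniformContinuousOn f (Set.Icc 0 1) :=
    isCompact_Icc.uniformContinuousOn_of_continuous hf.continuousOn
  rw [Metric.uniformContinuousOn_iff] at hUC
  rw [Metric.tendsto_nhds]
  intro δ hδ
  obtain ⟨η, hη, hUC'⟩ := hUC (δ/2) (by linarith)
  have hev1 : ∀ᶠ t in 𝓝[Set.Icc (0:ℝ) 1] t₀, |t - t₀| < min (δ/2) η := by
    apply Filter.Eventually.filter_mono nhdsWithin_le_nhds
    have : Metric.ball t₀ (min (δ/2) η) ∈ 𝓝 t₀ :=
      Metric.ball_mem_nhds t₀ (lt_min (by linarith) hη)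
    filter_upwards [this] with t ht
    simpa [Real.dist_eq] using ht
  filter_upwards [hev1, eventually_mem_nhdsWithin] with t hlt htm
  rw [Real.dist_eq, sub_zero, abs_of_nonneg Metric.hausdorffDist_nonneg]
  have hlt1 : |t - t₀| < δ/2 := lt_of_lt_of_le hlt (min_le_left _ _)
  have hlt2 : |t - t₀| < η := lt_of_lt_of_le hlt (min_le_right _ _)
  have key : Metric.hausdorffDist
      ((fun s => (s, f s)) '' (Set.Icc (0 : ℝ) 1 ∩ Set.Icc (t - ε) (t + ε)))
      ((fun s => (s, f s)) '' (Set.Icc (0 : ℝ) 1 ∩ Set.Icc (t₀ - ε) (t₀ + ε))) ≤ δ/2 := by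
    apply Metric.hausdorffDist_le_of_mem_dist (by linarith)
    · rintro x ⟨s, hs, rfl⟩
      obtain ⟨s', hs', hclose⟩ := aux_clamp ε t t₀ s ht₀ hs
      refine ⟨(s', f s'), Set.mem_image_of_mem _ hs', ?_⟩
      rw [Prod.dist_eq]
      apply max_le
      · rw [Real.dist_eq]; linarith
      · have := hUC' s hs.1 s' hs'.1 (by rw [Real.dist_eq]; linarith)
        linarith
    · rintro x ⟨s, hs, rfl⟩
      obtain ⟨s', hs', hclose⟩ := aux_clamp ε t₀ t s htm hs
      have habs : |t₀ - t| = |t - t₀| := abs_sub_comm _ _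
      refine ⟨(s', f s'), Set.mem_image_of_mem _ hs', ?_⟩
      rw [Prod.dist_eq]
      apply max_le
      · rw [Real.dist_eq]; rw [habs] at hclose; linarith
      · rw [habs] at hclose
        have := hUC' s hs.1 s' hs'.1 (by rw [Real.dist_eq]; linarith)
        linarith
  linarith
end

section
/- Let E be a metric space, endow ℝ × E with the max product metric, and let f, g : ℝ → E be continuous. Then for every t ∈ [0,1], the restricted one-sided Fréchet distance converges to the pointwise distance as the ball radius shrinks: d_F(f∘θ_{[a_{t,ε}, b_{t,ε}]}, g∘θ_{[a_{t,ε}, b_{t,ε}]}) → dist_E(f(t), g(t)) as ε → 0⁺. This is condition (A3) for the Fréchet distance. -/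
open Filter Topology

/-- The set `Φ` of admissible reparametrizations of `[0,1]`: continuous,
nondecreasing, mapping `[0,1]` into `[0,1]`, with `φ(0) = 0` and `φ(1) = 1`. -/
def frechetPhi : Set (ℝ → ℝ) :=
  {φ | ContinuousOn φ (Set.Icc 0 1) ∧ MonotoneOn φ (Set.Icc 0 1) ∧
    Set.MapsTo φ (Set.Icc 0 1) (Set.Icc 0 1) ∧ φ 0 = 0 ∧ φ 1 = 1}

/-- The one-sided Fréchet (extended) distance over `[0,1]`, using the max product
metric on `ℝ × E`: `d_F(f,g) = inf_{φ∈Φ} sup_{s∈[0,1]} max(|s−φ(s)|, dist(f(s), g(φ(s))))`. -/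
noncomputable def frechetDist {E : Type*} [MetricSpace E] (f g : ℝ → E) : ENNReal :=
  ⨅ φ ∈ frechetPhi, ⨆ s ∈ Set.Icc (0 : ℝ) 1,
    max (edist s (φ s)) (edist (f s) (g (φ s)))

/-- The affine map `θ_{[a,b]} : [0,1] → [a,b]`, `θ(s) = a + (b−a)s`. -/
def thetaMap (a b : ℝ) : ℝ → ℝ := fun s => a + (b - a) * s

lemma id_mem_frechetPhi : id ∈ frechetPhi :=
  ⟨continuousOn_id, fun _ _ _ _ h => h, fun _ hx => hx, rfl, rfl⟩

lemma thetaMap_mem {a b : ℝ} (hab : a ≤ b) {s : ℝ} (hs : s ∈ Set.Icc (0:ℝ) 1) :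
    thetaMap a b s ∈ Set.Icc a b := by
  obtain ⟨h0, h1⟩ := hs
  simp only [thetaMap, Set.mem_Icc]
  constructor
  · nlinarith [mul_nonneg (sub_nonneg.2 hab) h0]
  · nlinarith [mul_le_of_le_one_right (sub_nonneg.2 hab) h1]

/-- (A3) for the Fréchet distance: for continuous `f, g : ℝ → E` and
`t ∈ [0,1]`, the restricted one-sided Fréchet distance over
`[max(t−ε,0), min(t+ε,1)]` converges to the pointwise distance `edist(f(t), g(t))`
as `ε → 0⁺`. -/
theorem frechet_restricted_tendsto_pointwise
    {E : Type*} [MetricSpace E] (f g : ℝ → E)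
    (hf : Continuous f) (hg : Continuous g)
    (t : ℝ) (ht : t ∈ Set.Icc (0 : ℝ) 1) :
    Tendsto
      (fun ε : ℝ => frechetDist
        (f ∘ thetaMap (max (t - ε) 0) (min (t + ε) 1))
        (g ∘ thetaMap (max (t - ε) 0) (min (t + ε) 1)))
      (nhdsWithin 0 (Set.Ioi 0)) (nhds (edist (f t) (g t))) := by
  have hD : edist (f t) (g t) ≠ ⊤ := edist_ne_top _ _
  rw [ENNReal.tendsto_nhds hD]
  intro δ hδ
  set c : ENNReal := min (δ/2) 1 with hcdef
  have hc0 : 0 < c := lt_min (ENNReal.half_pos hδ.ne') one_pos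
  have hcc : c + c ≤ δ :=
    le_trans (add_le_add (min_le_left _ _) (min_le_left _ _)) (le_of_eq (ENNReal.add_halves δ))
  have hcδ : c ≤ δ := le_trans (min_le_left _ _) ENNReal.half_le_self
  obtain ⟨δf, hδf0, hδf⟩ := EMetric.tendsto_nhds_nhds.1 (hf.continuousAt (x := t)) c hc0
  obtain ⟨δg, hδg0, hδg⟩ := EMetric.tendsto_nhds_nhds.1 (hg.continuousAt (x := t)) c hc0
  obtain ⟨r, -, hr1, hr2⟩ :=
    ENNReal.lt_iff_exists_real_btwn.1 (show (0:ENNReal) < min δf δg from lt_min hδf0 hδg0)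
  have hr0 : 0 < r := ENNReal.ofReal_pos.1 hr1
  filter_upwards [Ioo_mem_nhdsGT_of_mem (Set.left_mem_Ico.2 hr0)] with ε hε
  obtain ⟨hε0, hεr⟩ := hε
  set a := max (t - ε) 0 with ha
  set b := min (t + ε) 1 with hb
  have hta : t - ε ≤ a := le_max_left _ _
  have hbt : b ≤ t + ε := min_le_left _ _
  have hat : a ≤ t := max_le (by linarith) ht.1
  have htb : t ≤ b := le_min (by linarith) ht.2
  have hab : a < b := lt_min (max_lt (by linarith) (by linarith [ht.1]))
    (max_lt (by linarith [ht.2]) one_pos)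
  have hnear : ∀ x ∈ Set.Icc a b, edist x t < min δf δg := by
    intro x hx
    have h1 : |x - t| ≤ ε := by
      rw [abs_le]
      constructor <;> [linarith [hx.1]; linarith [hx.2]]
    calc edist x t = ENNReal.ofReal |x - t| := by rw [edist_dist, Real.dist_eq]
      _ ≤ ENNReal.ofReal ε := ENNReal.ofReal_le_ofReal h1
      _ < ENNReal.ofReal r := (ENNReal.ofReal_lt_ofReal_iff hr0).2 hεr
      _ < min δf δg := hr2
  have hfc : ∀ x ∈ Set.Icc a b, edist (f x) (f t) < c := fun x hx =>
    hδf ((hnear x hx).trans_le (min_le_left _ _))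
  have hgc : ∀ x ∈ Set.Icc a b, edist (g x) (g t) < c := fun x hx =>
    hδg ((hnear x hx).trans_le (min_le_right _ _))
  have hθ : ∀ s ∈ Set.Icc (0:ℝ) 1, thetaMap a b s ∈ Set.Icc a b := fun s hs =>
    thetaMap_mem hab.le hs
  constructor
  · -- lower bound
    apply le_iInf₂
    intro φ hφ
    rw [tsub_le_iff_right]
    set s₀ := (t - a)/(b - a) with hs₀
    have hba : (0:ℝ) < b - a := by linarith
    have hs₀mem : s₀ ∈ Set.Icc (0:ℝ) 1 :=
      ⟨div_nonneg (by linarith) hba.le, (div_le_one hba).2 (by linarith)⟩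
    have hθs₀ : thetaMap a b s₀ = t := by
      simp only [thetaMap, hs₀]
      field_simp
      ring
    have hφs₀ : φ s₀ ∈ Set.Icc (0:ℝ) 1 := hφ.2.2.1 hs₀mem
    have hx : thetaMap a b (φ s₀) ∈ Set.Icc a b := thetaMap_mem hab.le hφs₀
    calc edist (f t) (g t)
        ≤ edist (f t) (g (thetaMap a b (φ s₀))) + edist (g (thetaMap a b (φ s₀))) (g t) :=
          edist_triangle _ _ _
      _ ≤ (⨆ s ∈ Set.Icc (0:ℝ) 1,
            max (edist s (φ s)) (edist ((f ∘ thetaMap a b) s) ((g ∘ thetaMap a b) (φ s)))) + δ := by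
          apply add_le_add
          · refine le_trans ?_ (le_iSup₂ (f := fun s (_ : s ∈ Set.Icc (0:ℝ) 1) =>
              max (edist s (φ s)) (edist ((f ∘ thetaMap a b) s) ((g ∘ thetaMap a b) (φ s))))
              s₀ hs₀mem)
            rw [Function.comp_apply, Function.comp_apply, hθs₀]
            exact le_max_right _ _
          · exact le_trans (hgc _ hx).le hcδ
  · -- upper bound
    refine le_trans (iInf₂_le id id_mem_frechetPhi) ?_
    apply iSup₂_le
    intro s hs
    rw [id_eq, edist_self, max_eq_right (zero_le (a := _)), Function.comp_apply, Function.comp_apply]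
    calc edist (f (thetaMap a b s)) (g (thetaMap a b s))
        ≤ edist (f (thetaMap a b s)) (f t) + edist (f t) (g t) +
            edist (g t) (g (thetaMap a b s)) := edist_triangle4 _ _ _ _
      _ ≤ c + edist (f t) (g t) + c := by
          refine add_le_add (add_le_add (hfc _ (hθ s hs)).le le_rfl) ?_
          rw [edist_comm]
          exact (hgc _ (hθ s hs)).le
      _ = edist (f t) (g t) + (c + c) := by ring
      _ ≤ edist (f t) (g t) + δ := add_le_add le_rfl hcc
end

section
/- Let E be a metric space, endow ℝ × E with the max product metric, and let f : ℝ → E be continuous. Then for every t ∈ [0,1] and ε₀ ≥ 0, the restricted reparametrizations of f vary continuously in the radius with respect to the one-sided Fréchet distance: d_F(f∘θ_{[a_{t,ε}, b_{t,ε}]}, f∘θ_{[a_{t,ε₀}, b_{t,ε₀}]}) → 0 as ε → ε₀ (with ε ≥ 0). This is condition (A4) for the Fréchet distance. -/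
open Filter Topology

lemma id_mem_frechetPhi_s16 : (fun s : ℝ => s) ∈ frechetPhi :=
  ⟨continuousOn_id, fun _ _ _ _ h => h, fun _ hx => hx, rfl, rfl⟩

lemma theta_mem_Icc {t ε s : ℝ} (ht : t ∈ Set.Icc (0:ℝ) 1) (hε : 0 ≤ ε)
    (hs : s ∈ Set.Icc (0:ℝ) 1) :
    thetaMap (max (t - ε) 0) (min (t + ε) 1) s ∈ Set.Icc (0:ℝ) 1 := by
  have hat : max (t - ε) 0 ≤ t := max_le (by linarith) ht.1
  have htb : t ≤ min (t + ε) 1 := le_min (by linarith) ht.2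
  have ha0 : (0:ℝ) ≤ max (t - ε) 0 := le_max_right _ _
  have hb1 : min (t + ε) 1 ≤ 1 := min_le_right _ _
  unfold thetaMap
  constructor <;> nlinarith [hs.1, hs.2]

/-- (A4) for the Fréchet distance: for continuous `f : ℝ → E`,
`t ∈ [0,1]` and `ε₀ ≥ 0`, the one-sided Fréchet distance between the
reparametrizations of `f` restricted to `[max(t−ε,0), min(t+ε,1)]` and to
`[max(t−ε₀,0), min(t+ε₀,1)]` tends to `0` as `ε → ε₀` with `ε ≥ 0`. -/
theorem frechet_restricted_continuous_in_radius
    {E : Type*} [MetricSpace E] (f : ℝ → E) (hf : Continuous f)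
    (t : ℝ) (ht : t ∈ Set.Icc (0 : ℝ) 1) (ε₀ : ℝ) (hε₀ : 0 ≤ ε₀) :
    Tendsto
      (fun ε : ℝ => frechetDist
        (f ∘ thetaMap (max (t - ε) 0) (min (t + ε) 1))
        (f ∘ thetaMap (max (t - ε₀) 0) (min (t + ε₀) 1)))
      (nhdsWithin ε₀ (Set.Ici 0)) (nhds 0) := by
  rw [ENNReal.tendsto_nhds_zero]
  intro δ hδ
  obtain ⟨r, hr0, hrδ⟩ : ∃ r : ℝ, 0 < r ∧ ENNReal.ofReal r ≤ δ := by
    rcases eq_or_ne δ ⊤ with h | h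
    · exact ⟨1, one_pos, by simp [h]⟩
    · exact ⟨δ.toReal, ENNReal.toReal_pos hδ.ne' h, by rw [ENNReal.ofReal_toReal h]⟩
  have huc : UniformContinuousOn f (Set.Icc 0 1) :=
    isCompact_Icc.uniformContinuousOn_of_continuous hf.continuousOn
  obtain ⟨δ', hδ', H⟩ := Metric.uniformContinuousOn_iff.mp huc r hr0
  have hev : ∀ᶠ ε in nhdsWithin ε₀ (Set.Ici 0), dist ε ε₀ < δ' := by
    have : ∀ᶠ ε in nhds ε₀, dist ε ε₀ < δ' := by
      filter_upwards [Metric.ball_mem_nhds ε₀ hδ'] with x hx using hx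
    exact this.filter_mono nhdsWithin_le_nhds
  filter_upwards [hev, eventually_mem_nhdsWithin] with ε hdist hε0
  simp only [Set.mem_Ici] at hε0
  set a := max (t - ε) 0 with ha
  set b := min (t + ε) 1 with hb
  set a' := max (t - ε₀) 0 with ha'
  set b' := min (t + ε₀) 1 with hb'
  have h1 : |a - a'| ≤ |ε - ε₀| := by
    have := abs_max_sub_max_le_abs (t - ε) (t - ε₀) 0
    have h2 : |(t - ε) - (t - ε₀)| = |ε - ε₀| := by
      rw [show (t - ε) - (t - ε₀) = -(ε - ε₀) by ring, abs_neg]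
    rw [h2] at this
    exact this
  have h2 : |b - b'| ≤ |ε - ε₀| := by
    have := abs_min_sub_min_le_max (t + ε) 1 (t + ε₀) 1
    simp only [sub_self, abs_zero] at this
    have h3 : |(t + ε) - (t + ε₀)| = |ε - ε₀| := by ring_nf
    calc |b - b'| ≤ max |(t + ε) - (t + ε₀)| 0 := this
      _ = |(t + ε) - (t + ε₀)| := max_eq_left (abs_nonneg _)
      _ = |ε - ε₀| := by rw [show (t + ε) - (t + ε₀) = ε - ε₀ by ring]
  calc frechetDist (f ∘ thetaMap a b) (f ∘ thetaMap a' b')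
      ≤ ⨆ s ∈ Set.Icc (0 : ℝ) 1,
        max (edist s ((fun s : ℝ => s) s))
          (edist ((f ∘ thetaMap a b) s) ((f ∘ thetaMap a' b') ((fun s : ℝ => s) s))) :=
        iInf₂_le (fun s : ℝ => s) id_mem_frechetPhi_s16
    _ ≤ ENNReal.ofReal r := by
        refine iSup₂_le fun s hs => ?_
        simp only [edist_self, Function.comp_apply]
        rw [max_eq_right zero_le, edist_dist]
        refine ENNReal.ofReal_le_ofReal (le_of_lt ?_)
        refine H _ (theta_mem_Icc ht hε0 hs) _ (theta_mem_Icc ht hε₀ hs) ?_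
        have hdiff : thetaMap a b s - thetaMap a' b' s
            = (a - a') * (1 - s) + (b - b') * s := by unfold thetaMap; ring
        have hle : |thetaMap a b s - thetaMap a' b' s| ≤ |ε - ε₀| := by
          rw [hdiff]
          calc |(a - a') * (1 - s) + (b - b') * s|
              ≤ |(a - a') * (1 - s)| + |(b - b') * s| := abs_add_le _ _
            _ = |a - a'| * (1 - s) + |b - b'| * s := by
                rw [abs_mul, abs_mul, abs_of_nonneg (by linarith [hs.2] : (0:ℝ) ≤ 1 - s),
                  abs_of_nonneg hs.1]
            _ ≤ |ε - ε₀| * (1 - s) + |ε - ε₀| * s := by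
                have := hs.1; have := hs.2
                nlinarith
            _ = |ε - ε₀| := by ring
        rw [Real.dist_eq]
        calc |thetaMap a b s - thetaMap a' b' s| ≤ |ε - ε₀| := hle
          _ < δ' := by rwa [Real.dist_eq] at hdist
    _ ≤ δ := hrδ
end

section
/- Let E be a metric space, endow ℝ × E with the max product metric, and let f : ℝ → E be continuous. Then for every ε > 0 and t₀ ∈ [0,1], the restricted reparametrizations of f vary continuously in the center with respect to the one-sided Fréchet distance: d_F(f∘θ_{[a_{t,ε}, b_{t,ε}]}, f∘θ_{[a_{t₀,ε}, b_{t₀,ε}]}) → 0 as t → t₀ with t ∈ [0,1]. This is condition (A5) for the Fréchet distance. -/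
open Filter Topology

lemma frechetDist_le_of_forall {E : Type*} [MetricSpace E] (f g : ℝ → E) (C : ENNReal)
    (h : ∀ s ∈ Set.Icc (0:ℝ) 1, edist (f s) (g s) ≤ C) : frechetDist f g ≤ C := by
  refine le_trans (iInf₂_le id id_mem_frechetPhi) ?_
  exact iSup₂_le fun s hs => max_le (by simp) (h s hs)

lemma abs_max_zero_sub (x y : ℝ) : |max x 0 - max y 0| ≤ |x - y| := by
  rcases le_total x y with h | h <;> rcases le_total x 0 with hx | hx <;>
    rcases le_total y 0 with hy | hy <;>
  simp [max_eq_left, max_eq_right, hx, hy, abs_le] <;> constructor <;>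
  cases abs_le.1 (le_refl |x - y|) <;> nlinarith [abs_nonneg (x-y), le_abs_self (x-y), neg_abs_le (x-y)]

lemma abs_min_one_sub (x y : ℝ) : |min x 1 - min y 1| ≤ |x - y| := by
  rcases le_total x 1 with hx | hx <;> rcases le_total y 1 with hy | hy <;>
  simp [min_eq_left, min_eq_right, hx, hy] <;>
  cases abs_le.1 (le_refl |x - y|) <;> rw [abs_le] <;> constructor <;>
  nlinarith [le_abs_self (x-y), neg_abs_le (x-y)]

lemma theta_mem (ε u s : ℝ) (hε : 0 < ε) (hu : u ∈ Set.Icc (0:ℝ) 1)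
    (hs : s ∈ Set.Icc (0:ℝ) 1) :
    thetaMap (max (u - ε) 0) (min (u + ε) 1) s ∈ Set.Icc (0:ℝ) 1 := by
  obtain ⟨hu0, hu1⟩ := hu; obtain ⟨hs0, hs1⟩ := hs
  have ha0 : (0:ℝ) ≤ max (u - ε) 0 := le_max_right _ _
  have hab : max (u - ε) 0 ≤ min (u + ε) 1 :=
    max_le (le_min (by linarith) (by linarith)) (le_min (by linarith) zero_le_one)
  have hb1 : min (u + ε) 1 ≤ 1 := min_le_right _ _
  unfold thetaMap
  constructor <;> nlinarith

lemma theta_dist {a b a' b' s d : ℝ} (hs : s ∈ Set.Icc (0:ℝ) 1)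
    (ha : |a - a'| ≤ d) (hb : |b - b'| ≤ d) :
    dist (thetaMap a b s) (thetaMap a' b' s) ≤ d := by
  obtain ⟨hs0, hs1⟩ := hs
  obtain ⟨ha1, ha2⟩ := abs_le.1 ha; obtain ⟨hb1, hb2⟩ := abs_le.1 hb
  rw [Real.dist_eq, abs_le]
  unfold thetaMap
  constructor <;> nlinarith

/-- (A5) for the Fréchet distance: for continuous `f : ℝ → E`,
`ε > 0` and `t₀ ∈ [0,1]`, the one-sided Fréchet distance between the
reparametrizations of `f` restricted to `[max(t−ε,0), min(t+ε,1)]` and to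
`[max(t₀−ε,0), min(t₀+ε,1)]` tends to `0` as `t → t₀` with `t ∈ [0,1]`. -/
theorem frechet_restricted_continuous_in_center
    {E : Type*} [MetricSpace E] (f : ℝ → E) (hf : Continuous f)
    (ε : ℝ) (hε : 0 < ε) (t₀ : ℝ) (ht₀ : t₀ ∈ Set.Icc (0 : ℝ) 1) :
    Tendsto
      (fun t : ℝ => frechetDist
        (f ∘ thetaMap (max (t - ε) 0) (min (t + ε) 1))
        (f ∘ thetaMap (max (t₀ - ε) 0) (min (t₀ + ε) 1)))
      (nhdsWithin t₀ (Set.Icc 0 1)) (nhds 0) := by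
  rw [ENNReal.tendsto_nhds_zero]
  intro δ hδ
  obtain ⟨c, hc0, hcδ⟩ := exists_between hδ
  have hcT : c ≠ ⊤ := (hcδ.trans_le le_top).ne
  have hδ'0 : 0 < c.toReal := ENNReal.toReal_pos hc0.ne' hcT
  have huc : UniformContinuousOn f (Set.Icc 0 1) :=
    isCompact_Icc.uniformContinuousOn_of_continuous hf.continuousOn
  obtain ⟨η, hη0, hη⟩ := Metric.uniformContinuousOn_iff.1 huc c.toReal hδ'0
  have hev : ∀ᶠ t in nhdsWithin t₀ (Set.Icc 0 1), dist t t₀ < η :=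
    eventually_nhdsWithin_of_eventually_nhds
      (eventually_of_mem (Metric.ball_mem_nhds t₀ hη0) fun t ht => ht)
  filter_upwards [hev, self_mem_nhdsWithin] with t hdist htmem
  refine le_trans (frechetDist_le_of_forall _ _ c ?_) hcδ.le
  intro s hs
  simp only [Function.comp_apply]
  have hx := theta_mem ε t s hε htmem hs
  have hy := theta_mem ε t₀ s hε ht₀ hs
  have hd : dist (thetaMap (max (t - ε) 0) (min (t + ε) 1) s)
      (thetaMap (max (t₀ - ε) 0) (min (t₀ + ε) 1) s) < η := by
    refine lt_of_le_of_lt (theta_dist hs ?_ ?_) hdist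
    · have := abs_max_zero_sub (t - ε) (t₀ - ε)
      simpa [Real.dist_eq, sub_sub_sub_cancel_right] using this
    · have := abs_min_one_sub (t + ε) (t₀ + ε)
      simpa [Real.dist_eq, add_sub_add_right_eq_sub] using this
  have := hη _ hx _ hy hd
  rw [edist_dist, ← ENNReal.ofReal_toReal hcT]
  exact ENNReal.ofReal_le_ofReal this.le
end

section
/- Let E be a metric space, endow ℝ × E with the max product metric, and let f, g : ℝ → E be continuous. If the one-sided Fréchet distance vanishes, d_F(f,g) = 0, then f(s) = g(s) for every s ∈ [0,1]. In particular d_F separates continuous functions on [0,1]. -/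
open Filter Topology

/-- for continuous `f, g : ℝ → E`, if the one-sided Fréchet distance
vanishes, then `f = g` on `[0,1]`; i.e. `d_F` separates continuous functions. -/
theorem frechet_eq_zero_imp_eq
    {E : Type*} [MetricSpace E] (f g : ℝ → E)
    (hf : Continuous f) (hg : Continuous g)
    (h0 : frechetDist f g = 0) :
    ∀ s ∈ Set.Icc (0 : ℝ) 1, f s = g s := by
  intro s hs
  have key : ∀ δ : ℝ, 0 < δ → dist (f s) (g s) < δ := by
    intro δ hδ
    obtain ⟨η, hη, hηg⟩ := Metric.continuous_iff.mp hg s (δ/2) (by positivity)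
    set ε : ℝ := min η (δ/2) with hεdef
    have hε : 0 < ε := lt_min hη (by positivity)
    have hlt : frechetDist f g < ENNReal.ofReal ε := by
      rw [h0]; exact ENNReal.ofReal_pos.2 hε
    rw [frechetDist] at hlt
    simp only [iInf_lt_iff] at hlt
    obtain ⟨φ, hφ, hφlt⟩ := hlt
    have h1 : max (edist s (φ s)) (edist (f s) (g (φ s))) < ENNReal.ofReal ε :=
      lt_of_le_of_lt (le_biSup (fun t => max (edist t (φ t)) (edist (f t) (g (φ t)))) hs) hφlt
    rw [max_lt_iff] at h1
    have h2 : dist s (φ s) < ε := edist_lt_ofReal.mp h1.1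
    have h3 : dist (f s) (g (φ s)) < ε := edist_lt_ofReal.mp h1.2
    have h4 : dist (g (φ s)) (g s) < δ/2 := by
      apply hηg
      rw [dist_comm]
      exact lt_of_lt_of_le h2 (min_le_left _ _)
    have h5 : dist (f s) (g (φ s)) < δ/2 := lt_of_lt_of_le h3 (min_le_right _ _)
    calc dist (f s) (g s) ≤ dist (f s) (g (φ s)) + dist (g (φ s)) (g s) := dist_triangle _ _ _
      _ < δ/2 + δ/2 := by linarith
      _ = δ := by ring
  have hle : dist (f s) (g s) ≤ 0 := by
    by_contra h
    exact lt_irrefl _ (key _ (lt_of_not_ge h))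
  exact eq_of_dist_eq_zero (le_antisymm hle dist_nonneg)
end
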